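/- Let ℓ ∈ M, K = M ∖ {ℓ}, and fix μ ∈ ℝ^K; let ϱ = (c_K(μ))_ℓ, and for r ∈ ℝ let τ(r) ∈ ℝ^M be the vector agreeing with μ on K and with τ(r)_ℓ = r. Let r0 ≥ ϱ, set x0 = c_M(τ(r0)) and a0 = v(x0). Then (x0)_ℓ = r0, and x0 is the efficient point at these levels in the constraint subspace h(μ): (x0)_ℓ = max{x_ℓ : x ∈ h(μ), v(x) ≤ a0} and v(x0) = min{v(x) : x ∈ h(μ), x_ℓ ≥ r0}. -/

import Mathlib

/-!
Let `λ = (Q x0)_ℓ`, the Lagrange multiplier of the return constraint at `x0`. Since `Q x0` vanishes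
off `M`, for every `x ∈ h(μ)` the risk expands exactly as
`v(x) = v(x0) + 2 (x_ℓ - x0_ℓ) λ + v(x - x0)`.
Once `λ ≥ 0`, this gives both optimality statements at once. The sign of `λ` comes from comparing
with the unconstrained-return minimiser `c = c_K(μ)`: as `Q c` vanishes off `K`,
`v(x0 - c) = (x0_ℓ - c_ℓ) λ`, and `x0_ℓ = r0 ≥ ϱ = c_ℓ`.
-/

open Matrix

theorem dotProduct_eq_mul_of_forall_ne {ι R : Type*} [Fintype ι] [CommSemiring R]
    {u w : ι → R} (ℓ : ι) (h : ∀ i ≠ ℓ, u i = 0 ∨ w i = 0) : u ⬝ᵥ w = u ℓ * w ℓ :=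
  Finset.sum_eq_single ℓ (fun i _ hi => by rcases h i hi with h | h <;> simp [h])
    (fun hℓ => absurd (Finset.mem_univ ℓ) hℓ)

namespace Matrix

variable {ι R : Type*} [Fintype ι]

theorem IsSymm.dotProduct_mulVec_comm [CommSemiring R] {Q : Matrix ι ι R} (hQ : Q.IsSymm)
    (x y : ι → R) : x ⬝ᵥ Q *ᵥ y = y ⬝ᵥ Q *ᵥ x := by
  rw [dotProduct_mulVec, ← mulVec_transpose, hQ.eq, dotProduct_comm]

theorem IsSymm.add_dotProduct_mulVec_add [CommRing R] {Q : Matrix ι ι R} (hQ : Q.IsSymm)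
    (y z : ι → R) :
    (y + z) ⬝ᵥ Q *ᵥ (y + z) = y ⬝ᵥ Q *ᵥ y + 2 * (z ⬝ᵥ Q *ᵥ y) + z ⬝ᵥ Q *ᵥ z := by
  rw [mulVec_add, dotProduct_add, add_dotProduct, add_dotProduct, hQ.dotProduct_mulVec_comm y z]
  ring

theorem PosDef.eq_zero_of_dotProduct_mulVec_self_nonpos {Q : Matrix ι ι ℝ} (hQ : Q.PosDef)
    {x : ι → ℝ} (hx : x ⬝ᵥ Q *ᵥ x ≤ 0) : x = 0 := by
  by_contra h
  simpa using hx.trans_lt (hQ.dotProduct_mulVec_pos h)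

end Matrix

namespace Markowitz

variable {ι : Type*} [Fintype ι] [DecidableEq ι] {Q : Matrix ι ι ℝ} {M : Finset ι} {ℓ : ι}
  {x x0 : ι → ℝ}

theorem sub_dotProduct_mulVec_eq (hx : ∀ j ∈ M.erase ℓ, x j = x0 j)
    (hx0 : ∀ i ∉ M, (Q *ᵥ x0) i = 0) :
    (x - x0) ⬝ᵥ Q *ᵥ x0 = (x ℓ - x0 ℓ) * (Q *ᵥ x0) ℓ :=
  dotProduct_eq_mul_of_forall_ne ℓ fun i hi => by
    by_cases hiM : i ∈ M
    · exact .inl (sub_eq_zero.mpr (hx i (Finset.mem_erase.mpr ⟨hi, hiM⟩)))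
    · exact .inr (hx0 i hiM)

theorem risk_eq (hQ : Q.IsSymm) (hx : ∀ j ∈ M.erase ℓ, x j = x0 j)
    (hx0 : ∀ i ∉ M, (Q *ᵥ x0) i = 0) :
    x ⬝ᵥ Q *ᵥ x =
      x0 ⬝ᵥ Q *ᵥ x0 + 2 * ((x ℓ - x0 ℓ) * (Q *ᵥ x0) ℓ) + (x - x0) ⬝ᵥ Q *ᵥ (x - x0) := by
  rw [← sub_dotProduct_mulVec_eq hx hx0, ← hQ.add_dotProduct_mulVec_add, add_sub_cancel]

theorem multiplier_nonneg {c : ι → ℝ} (hQ : Q.PosDef) (hc : ∀ i ∉ M.erase ℓ, (Q *ᵥ c) i = 0)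
    (hcx0 : ∀ j ∈ M.erase ℓ, c j = x0 j) (hx0 : ∀ i ∉ M, (Q *ᵥ x0) i = 0) (hle : c ℓ ≤ x0 ℓ) :
    0 ≤ (Q *ᵥ x0) ℓ := by
  have hℓ : ℓ ∉ M.erase ℓ := Finset.notMem_erase ℓ M
  have hcross : (c - x0) ⬝ᵥ Q *ᵥ c = 0 := by
    rw [dotProduct_eq_mul_of_forall_ne ℓ fun i _ => ?_, hc ℓ hℓ, mul_zero]
    by_cases hi : i ∈ M.erase ℓ
    · exact .inl (sub_eq_zero.mpr (hcx0 i hi))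
    · exact .inr (hc i hi)
  have hrisk : (c - x0) ⬝ᵥ Q *ᵥ (c - x0) = (x0 ℓ - c ℓ) * (Q *ᵥ x0) ℓ := by
    rw [mulVec_sub, dotProduct_sub, hcross, sub_dotProduct_mulVec_eq hcx0 hx0]
    ring
  rcases hle.lt_or_eq with hlt | heq
  · refine nonneg_of_mul_nonneg_right ?_ (sub_pos.mpr hlt)
    exact hrisk ▸ hQ.posSemidef.dotProduct_mulVec_nonneg _
  · rw [heq, sub_self, zero_mul] at hrisk
    rw [← sub_eq_zero.mp (hQ.eq_zero_of_dotProduct_mulVec_self_nonpos hrisk.le), hc ℓ hℓ]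

theorem return_le_of_risk_le (hQ : Q.PosDef) (hx0 : ∀ i ∉ M, (Q *ᵥ x0) i = 0)
    (hmult : 0 ≤ (Q *ᵥ x0) ℓ) (hx : ∀ j ∈ M.erase ℓ, x j = x0 j)
    (hrisk : x ⬝ᵥ Q *ᵥ x ≤ x0 ⬝ᵥ Q *ᵥ x0) : x ℓ ≤ x0 ℓ := by
  by_contra! hlt
  have hne : x - x0 ≠ 0 := fun h => hlt.ne' (sub_eq_zero.mp (congrFun h ℓ))
  have hpos := hQ.dotProduct_mulVec_pos hne
  rw [star_trivial] at hpos
  nlinarith [risk_eq (isHermitian_iff_isSymm.mp hQ.isHermitian) hx hx0]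

theorem risk_le_of_return_le (hQ : Q.PosSemidef) (hx0 : ∀ i ∉ M, (Q *ᵥ x0) i = 0)
    (hmult : 0 ≤ (Q *ᵥ x0) ℓ) (hx : ∀ j ∈ M.erase ℓ, x j = x0 j) (hret : x0 ℓ ≤ x ℓ) :
    x0 ⬝ᵥ Q *ᵥ x0 ≤ x ⬝ᵥ Q *ᵥ x := by
  have hnonneg := hQ.dotProduct_mulVec_nonneg (x - x0)
  rw [star_trivial] at hnonneg
  nlinarith [risk_eq (isHermitian_iff_isSymm.mp hQ.isHermitian) hx hx0]

end Markowitz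

theorem markowitz_efficient_portfolio_general {n : ℕ}
    (Q : Matrix (Fin n) (Fin n) ℝ) (hQ : Q.PosDef)
    (M : Finset (Fin n))
    (ℓ : Fin n) (hℓ : ℓ ∈ M)
    (μ : Fin n → ℝ)
    (cK : Fin n → ℝ)
    (hcK1 : ∀ j ∈ M.erase ℓ, cK j = μ j)
    (hcK2 : ∀ i ∉ M.erase ℓ, Q.mulVec cK i = 0)
    (r0 : ℝ) (hr0 : cK ℓ ≤ r0)
    (x0 : Fin n → ℝ)
    (hx01 : ∀ j ∈ M, x0 j = Function.update μ ℓ r0 j)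
    (hx02 : ∀ i ∉ M, Q.mulVec x0 i = 0) :
    x0 ℓ = r0 ∧
    IsGreatest {t : ℝ | ∃ x : Fin n → ℝ, (∀ j ∈ M.erase ℓ, x j = μ j) ∧
        x ⬝ᵥ Q.mulVec x ≤ x0 ⬝ᵥ Q.mulVec x0 ∧ t = x ℓ} (x0 ℓ) ∧
    IsLeast {t : ℝ | ∃ x : Fin n → ℝ, (∀ j ∈ M.erase ℓ, x j = μ j) ∧
        r0 ≤ x ℓ ∧ t = x ⬝ᵥ Q.mulVec x} (x0 ⬝ᵥ Q.mulVec x0) := by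
  have hx0ℓ : x0 ℓ = r0 := by simpa using hx01 ℓ hℓ
  have hx0μ : ∀ j ∈ M.erase ℓ, x0 j = μ j := fun j hj => by
    simpa [Function.update_of_ne (Finset.ne_of_mem_erase hj)] using
      hx01 j (Finset.mem_of_mem_erase hj)
  have hmult : 0 ≤ (Q *ᵥ x0) ℓ :=
    Markowitz.multiplier_nonneg hQ hcK2 (fun j hj => (hcK1 j hj).trans (hx0μ j hj).symm) hx02
      (hx0ℓ ▸ hr0)
  have hx0 {x : Fin n → ℝ} (hx : ∀ j ∈ M.erase ℓ, x j = μ j) :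
      ∀ j ∈ M.erase ℓ, x j = x0 j := fun j hj => (hx j hj).trans (hx0μ j hj).symm
  refine ⟨hx0ℓ, ⟨⟨x0, hx0μ, le_rfl, rfl⟩, ?_⟩, ⟨⟨x0, hx0μ, hx0ℓ.ge, rfl⟩, ?_⟩⟩
  · rintro _ ⟨x, hx, hrisk, rfl⟩
    exact Markowitz.return_le_of_risk_le hQ hx02 hmult (hx0 hx) hrisk
  · rintro _ ⟨x, hx, hret, rfl⟩
    exact Markowitz.risk_le_of_return_le hQ.posSemidef hx02 hmult (hx0 hx) (hx0ℓ ▸ hret)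

/-- with K = M ∖ {ℓ}, μ ∈ ℝ^K, ϱ = (c_K(μ))_ℓ, r0 ≥ ϱ,
τ(r0) agreeing with μ on K and equal to r0 at ℓ, x0 = c_M(τ(r0)) and a0 = v(x0):
(x0)_ℓ = r0, (x0)_ℓ = max{x_ℓ : x ∈ h(μ), v(x) ≤ a0}, and
v(x0) = min{v(x) : x ∈ h(μ), x_ℓ ≥ r0}. -/
theorem markowitz_efficient_portfolio {n : ℕ} (hn : 0 < n)
    (Q : Matrix (Fin n) (Fin n) ℝ) (hQ : Q.PosDef)
    (M : Finset (Fin n)) (hM : M ≠ Finset.univ)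
    (ℓ : Fin n) (hℓ : ℓ ∈ M)
    (μ : Fin n → ℝ)
    (cK : Fin n → ℝ)
    (hcK1 : ∀ j ∈ M.erase ℓ, cK j = μ j)
    (hcK2 : ∀ i ∉ M.erase ℓ, Q.mulVec cK i = 0)
    (r0 : ℝ) (hr0 : cK ℓ ≤ r0)
    (x0 : Fin n → ℝ)
    (hx01 : ∀ j ∈ M, x0 j = Function.update μ ℓ r0 j)
    (hx02 : ∀ i ∉ M, Q.mulVec x0 i = 0) :
    x0 ℓ = r0 ∧
    IsGreatest {t : ℝ | ∃ x : Fin n → ℝ, (∀ j ∈ M.erase ℓ, x j = μ j) ∧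
        x ⬝ᵥ Q.mulVec x ≤ x0 ⬝ᵥ Q.mulVec x0 ∧ t = x ℓ} (x0 ℓ) ∧
    IsLeast {t : ℝ | ∃ x : Fin n → ℝ, (∀ j ∈ M.erase ℓ, x j = μ j) ∧
        r0 ≤ x ℓ ∧ t = x ⬝ᵥ Q.mulVec x} (x0 ⬝ᵥ Q.mulVec x0) :=
  markowitz_efficient_portfolio_general Q hQ M ℓ hℓ μ cK hcK1 hcK2 r0 hr0 x0 hx01 hx02
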